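/- If w is a real number with w < -1 and w * exp(w) = -2/exp(3), and alpha = 1 - 1/(w + 1), then 1 < alpha < 2 and -2*alpha + 3 + (alpha - 1) * log(2*(alpha - 1)/alpha) = 0. -/

import Mathlib

/-!
On `(-∞, -1]` the map `x ↦ x * exp x` is strictly decreasing, and at `-2` it takes the value
`-2 / e² < -2 / e³`; hence `w < -2`, which places `alpha = w / (w + 1)` in `(1, 2)`.
The defining equation of `w` rewrites as `-2 / w = exp (w + 3)`, and `2 * (alpha - 1) / alpha`
is exactly `-2 / w`, so the logarithm equals `w + 3` and the identity becomes rational in `w`.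
-/

open Real Set

theorem strictAntiOn_mul_exp_Iic : StrictAntiOn (fun x : ℝ => x * exp x) (Iic (-1)) := by
  apply strictAntiOn_of_deriv_neg (convex_Iic _) (by fun_prop)
  intro x hx
  rw [interior_Iic, mem_Iio] at hx
  rw [((hasDerivAt_id' x).fun_mul (hasDerivAt_exp x)).deriv, one_mul, ← one_add_mul]
  exact mul_neg_of_neg_of_pos (by linarith) (exp_pos x)

theorem lt_neg_two_of_mul_exp_eq {w : ℝ} (hw : w ≤ -1) (hweq : w * exp w = -2 / exp 3) :
    w < -2 := by
  have hlt : -2 * exp (-2) < w * exp w := by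
    rw [hweq, exp_neg, neg_mul, neg_div, neg_lt_neg_iff, ← div_eq_mul_inv]
    exact div_lt_div_of_pos_left two_pos (exp_pos 2) (exp_lt_exp.2 (by norm_num))
  exact (strictAntiOn_mul_exp_Iic.lt_iff_gt (by norm_num : (-2 : ℝ) ∈ Iic (-1)) hw).1 hlt

theorem neg_two_div_eq_exp_add_three {w : ℝ} (hw : w ≠ 0) (hweq : w * exp w = -2 / exp 3) :
    -2 / w = exp (w + 3) := by
  rw [div_eq_iff hw, exp_add, mul_right_comm, mul_comm _ w, hweq,
    div_mul_cancel₀ _ (exp_pos 3).ne']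

theorem one_sub_one_div_add_one_mem_Ioo {w : ℝ} (hw : w < -2) :
    1 - 1 / (w + 1) ∈ Ioo 1 2 := by
  have hneg : 1 / (w + 1) < 0 := div_neg_of_pos_of_neg one_pos (by linarith)
  have hgt : -1 < 1 / (w + 1) := by
    rw [lt_div_iff_of_neg (by linarith)]
    linarith
  constructor <;> linarith

theorem two_mul_sub_one_div_one_sub_one_div_add_one {w : ℝ} (hw : w ≠ 0) (hw1 : w + 1 ≠ 0) :
    2 * ((1 - 1 / (w + 1)) - 1) / (1 - 1 / (w + 1)) = -2 / w := by
  rw [one_sub_div hw1, add_sub_cancel_right]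
  field_simp
  ring

theorem alpha_root_of_equation (w : ℝ) (hw : w < -1)
    (hweq : w * Real.exp w = -2 / Real.exp 3)
    (alpha : ℝ) (halpha : alpha = 1 - 1 / (w + 1)) :
    1 < alpha ∧ alpha < 2 ∧
      -2 * alpha + 3 + (alpha - 1) * Real.log (2 * (alpha - 1) / alpha) = 0 := by
  have hw2 : w < -2 := lt_neg_two_of_mul_exp_eq hw.le hweq
  have hw0 : w ≠ 0 := by linarith
  have hw1 : w + 1 ≠ 0 := by linarith
  subst halpha
  obtain ⟨hlower, hupper⟩ := one_sub_one_div_add_one_mem_Ioo hw2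
  refine ⟨hlower, hupper, ?_⟩
  rw [two_mul_sub_one_div_one_sub_one_div_add_one hw0 hw1,
    neg_two_div_eq_exp_add_three hw0 hweq, log_exp]
  field_simp
  ring
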